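/- arXiv:2112.01939 — 2 statements merged into one kernel-verified Lean document; each statement's English description precedes it below -/
import Mathlib

section
/- Let f(X) = -log det(X) + tr(X S) + Σ_{i≠j} λ_{ij} |X_{ij}| on the set of symmetric nonsingular M-matrices, where S has strictly positive diagonal entries and λ_{ij} > 0 for all i ≠ j not in the disconnectivity set. Then for any X in the lower level set L_f = {X feasible : f(X) ≤ f(X⁰)}, the largest eigenvalue of X is bounded above by a constant M depending only on f(X⁰), S, and λ. -/
open Matrix

/-- The feasible set of the sign-constrained log-determinant program: symmetric positive
definite matrices with nonpositive off-diagonal entries vanishing on the disconnectivity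
set `E`. -/
def feasible {p : ℕ} (E : Set (Fin p × Fin p)) (X : Matrix (Fin p) (Fin p) ℝ) : Prop :=
  X.PosDef ∧ (∀ i j, i ≠ j → X i j ≤ 0) ∧ (∀ i j, (i, j) ∈ E → X i j = 0)

/-- The objective `f(X) = -log det X + tr(X S) + Σ_{i≠j} λ_{ij} |X_{ij}|`. -/
noncomputable def obj {p : ℕ} (S : Matrix (Fin p) (Fin p) ℝ) (l : Fin p → Fin p → ℝ)
    (X : Matrix (Fin p) (Fin p) ℝ) : ℝ :=
  -Real.log X.det + (X * S).trace + ∑ i, ∑ j, if i ≠ j then l i j * |X i j| else 0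

/-!
Let `t = tr X`. With `μ = min_i S_ii > 0` and `κ ≥ 0` such that `|S_ji| ≤ κ λ_ij` wherever `X_ij`
may be nonzero, expanding `tr(XS)` gives `μ t ≤ tr(XS) + κ Σ_{i≠j} λ_ij |X_ij|`, and since
`tr(XS) ≥ 0` this is at most `(1 + κ) (f(X) + log det X)`. All eigenvalues of `X` lie in `(0, t]`,
so `log det X ≤ p log t` and `λ_max(X) ≤ t`. On the level set this yields
`μ t ≤ (1 + κ) (f(X⁰) + p log t)`, which bounds `t` because `log` grows sublinearly.
-/

theorem Finite.exists_pos_le_of_forall_pos {ι : Type*} [Finite ι] {f : ι → ℝ}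
    (hf : ∀ i, 0 < f i) : ∃ μ, 0 < μ ∧ ∀ i, μ ≤ f i := by
  cases isEmpty_or_nonempty ι
  · exact ⟨1, one_pos, isEmptyElim⟩
  · obtain ⟨i₀, hi₀⟩ := Finite.exists_min f
    exact ⟨f i₀, hf i₀, hi₀⟩

theorem Finite.exists_nonneg_le_mul {ι : Type*} [Finite ι] (f g : ι → ℝ) (P : ι → Prop)
    (hg : ∀ i, P i → 0 < g i) : ∃ κ, 0 ≤ κ ∧ ∀ i, P i → f i ≤ κ * g i := by
  obtain ⟨B, hB⟩ := Finite.exists_le fun i => f i / g i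
  refine ⟨max B 0, le_max_right B 0, fun i hi => ?_⟩
  calc f i = f i / g i * g i := (div_mul_cancel₀ _ (hg i hi).ne').symm
    _ ≤ max B 0 * g i := by gcongr; exacts [(hg i hi).le, (hB i).trans (le_max_left B 0)]

theorem Real.exists_bound_of_mul_le_add_mul_log {μ A B : ℝ} (hμ : 0 < μ) (hB : 0 ≤ B) :
    ∃ M, 0 < M ∧ ∀ t, μ * t ≤ A + B * Real.log t → t ≤ M := by
  set ε := μ / (2 * (B + 1)) with hε
  have hε_pos : 0 < ε := by positivity
  have hBε : B * ε ≤ μ / 2 := by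
    rw [hε, mul_div_assoc', div_le_div_iff₀ (by positivity) two_pos]
    nlinarith
  refine ⟨max 1 (2 * (A - B * (1 + Real.log ε)) / μ), by positivity, fun t ht => ?_⟩
  rcases le_or_gt t 0 with ht0 | ht0
  · exact ht0.trans (zero_le_one.trans (le_max_left _ _))
  -- `log (ε t) ≤ ε t - 1`
  have hlog : Real.log t ≤ ε * t - 1 - Real.log ε := by
    have := Real.log_le_sub_one_of_pos (mul_pos hε_pos ht0)
    rw [Real.log_mul hε_pos.ne' ht0.ne'] at this
    linarith
  have : μ * t ≤ 2 * (A - B * (1 + Real.log ε)) := by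
    nlinarith [mul_le_mul_of_nonneg_left hlog hB, mul_le_mul_of_nonneg_right hBε ht0.le]
  exact ((le_div_iff₀ hμ).2 (by linarith)).trans (le_max_right _ _)

section Spectral

variable {n : Type*} [Fintype n] [DecidableEq n]

theorem Matrix.PosSemidef.eigenvalues_le_trace {X : Matrix n n ℝ} (hX : X.PosSemidef) (i : n) :
    hX.1.eigenvalues i ≤ X.trace := by
  rw [hX.1.trace_eq_sum_eigenvalues]
  exact Finset.single_le_sum (fun j _ => hX.eigenvalues_nonneg j) (Finset.mem_univ i)

theorem Matrix.PosDef.log_det_le_card_mul_log_trace {X : Matrix n n ℝ} (hX : X.PosDef) :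
    Real.log X.det ≤ Fintype.card n * Real.log X.trace := by
  rw [← Real.log_pow]
  refine Real.log_le_log hX.det_pos ?_
  rw [hX.1.det_eq_prod_eigenvalues, ← Finset.card_univ, ← Finset.prod_const]
  exact Finset.prod_le_prod (fun i _ => (hX.eigenvalues_pos i).le)
    fun i _ => hX.posSemidef.eigenvalues_le_trace i

open scoped MatrixOrder in
theorem Matrix.IsHermitian.posSemidef_smul_one_sub_of_eigenvalues_le {X : Matrix n n ℝ}
    (hX : X.IsHermitian) {M : ℝ} (h : ∀ i, hX.eigenvalues i ≤ M) :
    (M • (1 : Matrix n n ℝ) - X).PosSemidef := by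
  rw [← Algebra.algebraMap_eq_smul_one, ← le_iff]
  refine le_algebraMap_of_spectrum_le (fun x hx => ?_) hX
  obtain ⟨i, rfl⟩ := hX.spectrum_real_eq_range_eigenvalues ▸ hx
  exact h i

open scoped MatrixOrder in
theorem Matrix.PosSemidef.trace_mul_nonneg {X S : Matrix n n ℝ} (hX : X.PosSemidef)
    (hS : S.PosSemidef) : 0 ≤ (X * S).trace := by
  obtain ⟨B, rfl⟩ := CStarAlgebra.nonneg_iff_eq_star_mul_self.mp hX.nonneg
  rw [mul_assoc, trace_mul_comm, star_eq_conjTranspose]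
  exact (hS.mul_mul_conjTranspose_same B).trace_nonneg

end Spectral

section OffDiag

variable {n : Type*} [Fintype n] [DecidableEq n]

def offDiagL1 (w X : Matrix n n ℝ) : ℝ :=
  ∑ i, ∑ j, if i ≠ j then w i j * |X i j| else 0

theorem offDiagL1_nonneg {w X : Matrix n n ℝ} (h : ∀ i j, i ≠ j → 0 ≤ w i j * |X i j|) :
    0 ≤ offDiagL1 w X :=
  Finset.sum_nonneg fun i _ => Finset.sum_nonneg fun j _ => by
    split_ifs with hij
    exacts [h i j hij, le_rfl]

theorem offDiagL1_le_mul {w v X : Matrix n n ℝ} {κ : ℝ}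
    (h : ∀ i j, i ≠ j → w i j * |X i j| ≤ κ * (v i j * |X i j|)) :
    offDiagL1 w X ≤ κ * offDiagL1 v X := by
  simp only [offDiagL1, Finset.mul_sum, mul_ite, mul_zero]
  gcongr with i _ j _
  split_ifs with hij
  exacts [h i j hij, le_rfl]

theorem mul_trace_le_trace_mul_add_offDiagL1 {μ : ℝ} {X S : Matrix n n ℝ}
    (hX : ∀ i, 0 ≤ X i i) (hS : ∀ i, μ ≤ S i i) :
    μ * X.trace ≤ (X * S).trace + offDiagL1 (fun i j => |S j i|) X := by
  calc μ * X.trace = ∑ i, ∑ j, if i = j then μ * X i j else 0 := by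
        simp [trace, Finset.mul_sum]
    _ ≤ ∑ i, ∑ j, (X i j * S j i + if i ≠ j then |S j i| * |X i j| else 0) := by
        gcongr with i _ j _
        by_cases hij : i = j
        · subst hij
          simpa [mul_comm] using mul_le_mul_of_nonneg_left (hS i) (hX i)
        · have := neg_abs_le (X i j * S j i)
          simp only [hij, if_false, ne_eq, not_false_eq_true, if_true, abs_mul] at this ⊢
          linarith
    _ = (X * S).trace + offDiagL1 (fun i j => |S j i|) X := by
        simp [trace, mul_apply, offDiagL1, Finset.sum_add_distrib]

end OffDiag

theorem obj_eq_add_offDiagL1 {p : ℕ} (S : Matrix (Fin p) (Fin p) ℝ) (l : Fin p → Fin p → ℝ)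
    (X : Matrix (Fin p) (Fin p) ℝ) :
    obj S l X = -Real.log X.det + (X * S).trace + offDiagL1 (Matrix.of l) X :=
  rfl

theorem feasible.mul_trace_le {p : ℕ} {S : Matrix (Fin p) (Fin p) ℝ} (hS : S.PosSemidef)
    {E : Set (Fin p × Fin p)} {l : Fin p → Fin p → ℝ}
    (hl : ∀ i j, i ≠ j → (i, j) ∉ E → 0 < l i j) {μ κ : ℝ} (hμ : ∀ i, μ ≤ S i i) (hκ : 0 ≤ κ)
    (hκS : ∀ i j, i ≠ j → (i, j) ∉ E → |S j i| ≤ κ * l i j)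
    {X : Matrix (Fin p) (Fin p) ℝ} (hX : feasible E X) :
    μ * X.trace ≤ (1 + κ) * (obj S l X + p * Real.log X.trace) := by
  obtain ⟨hXpd, -, hXE⟩ := hX
  have hterm : ∀ i j, i ≠ j → |S j i| * |X i j| ≤ κ * (l i j * |X i j|) ∧ 0 ≤ l i j * |X i j| := by
    intro i j hij
    by_cases hijE : (i, j) ∈ E
    · simp [hXE i j hijE]
    · exact ⟨by rw [← mul_assoc]; gcongr; exact hκS i j hij hijE,
        mul_nonneg (hl i j hij hijE).le (abs_nonneg _)⟩
  have hpen := offDiagL1_le_mul (X := X) (v := Matrix.of l) fun i j hij => (hterm i j hij).1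
  have hpen_nonneg := offDiagL1_nonneg (X := X) (w := Matrix.of l) fun i j hij => (hterm i j hij).2
  have htr := hXpd.posSemidef.trace_mul_nonneg hS
  have hdet : Real.log X.det ≤ p * Real.log X.trace := by
    simpa using hXpd.log_det_le_card_mul_log_trace
  have hμtr := mul_trace_le_trace_mul_add_offDiagL1 (fun i => hXpd.diag_pos.le) hμ (X := X)
  rw [obj_eq_add_offDiagL1]
  nlinarith [mul_nonneg hκ htr, mul_nonneg hκ hpen_nonneg]

theorem stmt_4_general {p : ℕ} (S : Matrix (Fin p) (Fin p) ℝ) (hS : S.PosSemidef)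
    (hSdiag : ∀ i, 0 < S i i)
    (E : Set (Fin p × Fin p))
    (l : Fin p → Fin p → ℝ) (hl : ∀ i j, i ≠ j → (i, j) ∉ E → 0 < l i j)
    (X0 : Matrix (Fin p) (Fin p) ℝ) :
    ∃ M : ℝ, 0 < M ∧ ∀ X : Matrix (Fin p) (Fin p) ℝ,
      feasible E X → obj S l X ≤ obj S l X0 →
        (M • (1 : Matrix (Fin p) (Fin p) ℝ) - X).PosSemidef := by
  obtain ⟨μ, hμ, hμS⟩ := Finite.exists_pos_le_of_forall_pos hSdiag
  obtain ⟨κ, hκ, hκS⟩ := Finite.exists_nonneg_le_mul (fun ij => |S ij.2 ij.1|)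
    (fun ij => l ij.1 ij.2) (fun ij => ij.1 ≠ ij.2 ∧ ij ∉ E) fun ij hij => hl _ _ hij.1 hij.2
  obtain ⟨M, hM, hbound⟩ := Real.exists_bound_of_mul_le_add_mul_log hμ
    (A := (1 + κ) * obj S l X0) (B := (1 + κ) * p) (by positivity)
  refine ⟨M, hM, fun X hX hobj => hX.1.1.posSemidef_smul_one_sub_of_eigenvalues_le fun i =>
    (hX.1.posSemidef.eigenvalues_le_trace i).trans (hbound _ ?_)⟩
  calc μ * X.trace ≤ (1 + κ) * (obj S l X + p * Real.log X.trace) :=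
        hX.mul_trace_le hS hl hμS hκ (fun i j hij hijE => hκS (i, j) ⟨hij, hijE⟩)
    _ ≤ (1 + κ) * obj S l X0 + (1 + κ) * p * Real.log X.trace := by
        nlinarith [mul_le_mul_of_nonneg_left hobj (by positivity : (0 : ℝ) ≤ 1 + κ)]

/-- For the sign-constrained log-determinant objective with `S` positive
semidefinite having strictly positive diagonal and positive off-diagonal regularization
weights off the disconnectivity set, every `X` in the lower level set
`L_f = {X feasible : f(X) ≤ f(X⁰)}` has its largest eigenvalue bounded above by a constant
`M` (depending only on `f(X⁰)`, `S` and `λ`), i.e. `X ⪯ M I`. -/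
theorem stmt_4 {p : ℕ} (S : Matrix (Fin p) (Fin p) ℝ) (hS : S.PosSemidef)
    (hSdiag : ∀ i, 0 < S i i)
    (E : Set (Fin p × Fin p)) (hE : ∀ ij ∈ E, ij.1 ≠ ij.2)
    (l : Fin p → Fin p → ℝ) (hl : ∀ i j, i ≠ j → (i, j) ∉ E → 0 < l i j)
    (X0 : Matrix (Fin p) (Fin p) ℝ) (hX0 : feasible E X0) :
    ∃ M : ℝ, 0 < M ∧ ∀ X : Matrix (Fin p) (Fin p) ℝ,
      feasible E X → obj S l X ≤ obj S l X0 →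
        (M • (1 : Matrix (Fin p) (Fin p) ℝ) - X).PosSemidef :=
  stmt_4_general S hS hSdiag E l hl X0
end

section
/- The lower level set L_f = {X feasible : f(X) ≤ f(X⁰)} of the sign-constrained log-determinant objective is compact: it is closed and contained in {X : m I ⪯ X ⪯ M I} for some positive constants 0 < m ≤ M. -/
open Matrix

/-!
On the cone of positive semidefinite matrices obeying the sign and support constraints,
`g X = tr (X S) + Σ_{i≠j} λ_{ij} |X_{ij}|` is continuous, positively homogeneous and vanishes only
at `0`: if `g X = 0` the penalty forces `X` to be diagonal, and then `tr (X S) = Σ X_{ii} S_{ii}`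
with `S_{ii} > 0`. Minimising `g` over the compact trace-one slice gives `δ > 0` with
`δ tr X ≤ g X`. As `log det X ≤ p log tr X`, every `X` in the level set satisfies
`δ tr X - p log tr X ≤ f X⁰`, which bounds `tr X`, hence every eigenvalue, by some `T`; and
`det X ≥ exp (- f X⁰)` then bounds every eigenvalue below by `exp (- f X⁰) / T ^ (p - 1)`.
The level set is closed because it lies in `{det X ≥ exp (- f X⁰)}`, where the objective is
continuous and positive definiteness is the closed condition of positive semidefiniteness.
-/

open Filter Topology

namespace Matrix

lemma isCompact_setOf_abs_apply_le {m n : Type*} (r : ℝ) :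
    IsCompact {X : Matrix m n ℝ | ∀ i j, |X i j| ≤ r} := by
  change IsCompact {X : m → n → ℝ | ∀ i j, |X i j| ≤ r}
  convert isCompact_Icc (a := fun (_ : m) (_ : n) => -r) (b := fun _ _ => r) using 1
  ext X
  simp [abs_le, Pi.le_def, forall_and]

variable {n : Type*} [Fintype n]

lemma PosSemidef.abs_apply_le_trace {X : Matrix n n ℝ} (hX : X.PosSemidef) (i j : n) :
    |X i j| ≤ X.trace := by
  classical
  have hdiag : ∀ s : Finset n, ∑ k ∈ s, X k k ≤ X.trace := fun s =>
    Finset.sum_le_sum_of_subset_of_nonneg (Finset.subset_univ s) fun k _ _ => hX.diag_nonneg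
  rcases eq_or_ne i j with rfl | hij
  · simpa [abs_of_nonneg hX.diag_nonneg] using hdiag {i}
  have hpair : X i i + X j j ≤ X.trace := by simpa [Finset.sum_pair hij] using hdiag {i, j}
  have h₁ := (hX.submatrix ![i, j]).dotProduct_mulVec_nonneg ![1, 1]
  have h₂ := (hX.submatrix ![i, j]).dotProduct_mulVec_nonneg ![1, -1]
  simp only [dotProduct, mulVec, Fin.sum_univ_two, submatrix_apply, Pi.star_apply, star_trivial,
    cons_val_zero, cons_val_one, cons_val_fin_one, mul_one, one_mul, mul_neg, neg_mul] at h₁ h₂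
  have hsymm : X j i = X i j := hX.1.apply i j
  rw [abs_le]
  constructor <;> nlinarith [hX.diag_nonneg (i := i), hX.diag_nonneg (i := j)]

lemma PosSemidef.trace_mul_nonneg_s6 {X S : Matrix n n ℝ} (hX : X.PosSemidef) (hS : S.PosSemidef) :
    0 ≤ (X * S).trace := by
  classical
  open scoped MatrixOrder in
  obtain ⟨B, rfl⟩ := CStarAlgebra.nonneg_iff_eq_star_mul_self.mp hX.nonneg
  rw [Matrix.mul_assoc, trace_mul_comm]
  exact (hS.mul_mul_conjTranspose_same B).trace_nonneg

lemma isClosed_setOf_posSemidef : IsClosed {X : Matrix n n ℝ | X.PosSemidef} := by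
  simp only [posSemidef_iff_dotProduct_mulVec, Set.ofPred_and, Set.ofPred_forall]
  refine (isClosed_eq continuous_id.matrix_conjTranspose continuous_id).inter
    (isClosed_iInter fun v => isClosed_le continuous_const ?_)
  fun_prop

lemma isCompact_of_isClosed_of_trace_le {K : Set (Matrix n n ℝ)} (hK : IsClosed K)
    (hpsd : ∀ X ∈ K, X.PosSemidef) {r : ℝ} (htr : ∀ X ∈ K, X.trace ≤ r) : IsCompact K :=
  (isCompact_setOf_abs_apply_le r).of_isClosed_subset hK fun X hX i j =>
    ((hpsd X hX).abs_apply_le_trace i j).trans (htr X hX)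

lemma exists_pos_mul_trace_le {C : Set (Matrix n n ℝ)} (hC : IsClosed C)
    (hCpsd : ∀ X ∈ C, X.PosSemidef) (hCsmul : ∀ X ∈ C, ∀ t : ℝ, 0 ≤ t → t • X ∈ C)
    {g : Matrix n n ℝ → ℝ} (hg : Continuous g)
    (hgsmul : ∀ X ∈ C, ∀ t : ℝ, 0 ≤ t → g (t • X) = t * g X)
    (hgpos : ∀ X ∈ C, X ≠ 0 → 0 < g X) :
    ∃ δ > 0, ∀ X ∈ C, δ * X.trace ≤ g X := by
  set K := C ∩ {X | X.trace = 1}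
  have hK : IsCompact K := isCompact_of_isClosed_of_trace_le
    (hC.inter (isClosed_eq continuous_id.matrix_trace continuous_const))
    (fun X hX => hCpsd X hX.1) fun X hX => hX.2.le
  obtain ⟨δ, hδ, hδK⟩ := hK.exists_forall_le' hg.continuousOn fun X hX =>
    hgpos X hX.1 fun h => by simpa [h] using hX.2
  refine ⟨δ, hδ, fun X hX => ?_⟩
  rcases (hCpsd X hX).trace_nonneg.eq_or_lt with htr | htr
  · have hX0 : X = 0 := ((hCpsd X hX).trace_eq_zero_iff).mp htr.symm
    have hg0 : g 0 = 0 := by simpa using hgsmul 0 (hX0 ▸ hX) 0 le_rfl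
    simp [hX0, hg0]
  · have hmem : X.trace⁻¹ • X ∈ K :=
      ⟨hCsmul X hX _ (inv_nonneg.mpr htr.le), by simp [trace_smul, htr.ne']⟩
    have := hδK _ hmem
    rw [hgsmul X hX _ (inv_nonneg.mpr htr.le), le_inv_mul_iff₀ htr] at this
    linarith

variable [DecidableEq n]

open scoped MatrixOrder in
lemma IsHermitian.posSemidef_sub_smul_one_iff {X : Matrix n n ℝ} (hX : X.IsHermitian) (r : ℝ) :
    (X - r • 1).PosSemidef ↔ ∀ i, r ≤ hX.eigenvalues i := by
  rw [← le_iff, ← Algebra.algebraMap_eq_smul_one, algebraMap_le_iff_le_spectrum (ha := hX),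
    hX.spectrum_real_eq_range_eigenvalues, Set.forall_mem_range]

open scoped MatrixOrder in
lemma IsHermitian.posSemidef_smul_one_sub_iff {X : Matrix n n ℝ} (hX : X.IsHermitian) (r : ℝ) :
    (r • 1 - X).PosSemidef ↔ ∀ i, hX.eigenvalues i ≤ r := by
  rw [← le_iff, ← Algebra.algebraMap_eq_smul_one, le_algebraMap_iff_spectrum_le (ha := hX),
    hX.spectrum_real_eq_range_eigenvalues, Set.forall_mem_range]

lemma PosSemidef.eigenvalues_le_trace_s6 {X : Matrix n n ℝ} (hX : X.PosSemidef) (i : n) :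
    hX.1.eigenvalues i ≤ X.trace := by
  rw [hX.1.trace_eq_sum_eigenvalues]
  simpa using Finset.single_le_sum (fun j _ => hX.eigenvalues_nonneg j) (Finset.mem_univ i)

lemma PosDef.det_le_trace_pow {X : Matrix n n ℝ} (hX : X.PosDef) :
    X.det ≤ X.trace ^ Fintype.card n := by
  rw [hX.1.det_eq_prod_eigenvalues, ← Finset.card_univ, ← Finset.prod_const]
  simp only [RCLike.ofReal_real_eq_id, id_eq]
  exact Finset.prod_le_prod (fun i _ => (hX.eigenvalues_pos i).le)
    fun i _ => hX.posSemidef.eigenvalues_le_trace_s6 i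

lemma PosDef.det_le_eigenvalues_mul_pow {X : Matrix n n ℝ} (hX : X.PosDef) {M : ℝ}
    (hM : ∀ j, hX.1.eigenvalues j ≤ M) (i : n) :
    X.det ≤ hX.1.eigenvalues i * M ^ (Fintype.card n - 1) := by
  rw [hX.1.det_eq_prod_eigenvalues, ← Finset.card_univ,
    ← Finset.card_erase_of_mem (Finset.mem_univ i), ← Finset.prod_const]
  simp only [RCLike.ofReal_real_eq_id, id_eq]
  rw [← Finset.mul_prod_erase _ _ (Finset.mem_univ i)]
  exact mul_le_mul_of_nonneg_left
    (Finset.prod_le_prod (fun j _ => (hX.eigenvalues_pos j).le) fun j _ => hM j)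
    (hX.eigenvalues_pos i).le

lemma IsDiag.trace_mul_eq_sum {X : Matrix n n ℝ} (hX : X.IsDiag) (S : Matrix n n ℝ) :
    (X * S).trace = ∑ i, X i i * S i i := by
  conv_lhs => rw [← hX.diagonal_diag]
  simp [trace]

lemma exists_smul_one_le_of_trace_le_of_le_det {T r : ℝ} (hT : 0 < T) (hr : 0 < r) :
    ∃ m > 0, m ≤ T ∧ ∀ X : Matrix n n ℝ, X.PosDef → X.trace ≤ T → r ≤ X.det →
      (X - m • 1).PosSemidef ∧ (T • 1 - X).PosSemidef := by
  refine ⟨min (r / T ^ (Fintype.card n - 1)) T, by positivity, min_le_right _ _,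
    fun X hX htr hdet => ?_⟩
  have hle : ∀ i, hX.1.eigenvalues i ≤ T := fun i =>
    (hX.posSemidef.eigenvalues_le_trace_s6 i).trans htr
  refine ⟨(hX.1.posSemidef_sub_smul_one_iff _).mpr fun i => (min_le_left _ _).trans ?_,
    (hX.1.posSemidef_smul_one_sub_iff T).mpr hle⟩
  rw [div_le_iff₀ (by positivity)]
  exact hdet.trans (hX.det_le_eigenvalues_mul_pow hle i)

end Matrix

lemma Real.exists_le_of_mul_sub_mul_log_le {δ : ℝ} (hδ : 0 < δ) (P c : ℝ) :
    ∃ T > 0, ∀ t, δ * t - P * Real.log t ≤ c → t ≤ T := by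
  have hlim : Tendsto (fun t => δ * t - P * Real.log t) atTop atTop := by
    have hratio : Tendsto (fun t => δ - P * (Real.log t / t)) atTop (𝓝 δ) := by
      simpa using (Real.isLittleO_log_id_atTop.tendsto_div_nhds_zero.const_mul P).const_sub δ
    refine (tendsto_id.atTop_mul_pos hδ hratio).congr' ?_
    filter_upwards [eventually_gt_atTop 0] with t ht
    simp only [id_eq]
    field_simp
  obtain ⟨T₀, hT₀⟩ := eventually_atTop.mp (hlim.eventually_gt_atTop c)
  refine ⟨max T₀ 1, by positivity, fun t ht => ?_⟩
  by_contra! hlt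
  exact (hT₀ t (le_max_left _ _ |>.trans hlt.le)).not_ge ht

section SignConstrained

variable {n : Type*} {E : Set (n × n)} {l : n → n → ℝ}

def signConstrainedCone (E : Set (n × n)) : Set (Matrix n n ℝ) :=
  {X | X.PosSemidef ∧ (∀ i j, i ≠ j → X i j ≤ 0) ∧ ∀ i j, (i, j) ∈ E → X i j = 0}

lemma smul_mem_signConstrainedCone {X : Matrix n n ℝ} (hX : X ∈ signConstrainedCone E) {t : ℝ}
    (ht : 0 ≤ t) : t • X ∈ signConstrainedCone E := by
  obtain ⟨hpsd, hsign, hE⟩ := hX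
  exact ⟨hpsd.smul ht, fun i j hij => mul_nonpos_of_nonneg_of_nonpos ht (hsign i j hij),
    fun i j hij => by simp [hE i j hij]⟩

lemma isClosed_signConstrainedCone [Fintype n] (E : Set (n × n)) :
    IsClosed (signConstrainedCone E) := by
  simp only [signConstrainedCone, Set.ofPred_and, Set.ofPred_forall]
  exact isClosed_setOf_posSemidef.inter <|
    (isClosed_iInter fun i => isClosed_iInter fun j => isClosed_iInter fun _ =>
      isClosed_le (by fun_prop) continuous_const).inter
    (isClosed_iInter fun i => isClosed_iInter fun j => isClosed_iInter fun _ =>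
      isClosed_eq (by fun_prop) continuous_const)

variable [DecidableEq n]

lemma offDiagPenalty_term_nonneg (hl : ∀ i j, i ≠ j → (i, j) ∉ E → 0 < l i j)
    {X : Matrix n n ℝ} (hX : ∀ i j, (i, j) ∈ E → X i j = 0) (i j : n) :
    0 ≤ if i ≠ j then l i j * |X i j| else 0 := by
  split_ifs with hij
  · by_cases hE : (i, j) ∈ E
    · simp [hX i j hE]
    · exact mul_nonneg (hl i j hij hE).le (abs_nonneg _)
  · exact le_rfl

variable [Fintype n]

def offDiagPenalty (l : n → n → ℝ) (X : Matrix n n ℝ) : ℝ :=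
  ∑ i, ∑ j, if i ≠ j then l i j * |X i j| else 0

lemma continuous_offDiagPenalty (l : n → n → ℝ) : Continuous (offDiagPenalty l) := by
  refine continuous_finsetSum _ fun i _ => continuous_finsetSum _ fun j _ => ?_
  split_ifs <;> fun_prop

lemma offDiagPenalty_smul (l : n → n → ℝ) (X : Matrix n n ℝ) {t : ℝ} (ht : 0 ≤ t) :
    offDiagPenalty l (t • X) = t * offDiagPenalty l X := by
  simp only [offDiagPenalty, Finset.mul_sum, Matrix.smul_apply, smul_eq_mul, abs_mul,
    abs_of_nonneg ht, mul_ite, mul_zero]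
  congr! 3
  ring

lemma offDiagPenalty_nonneg (hl : ∀ i j, i ≠ j → (i, j) ∉ E → 0 < l i j) {X : Matrix n n ℝ}
    (hX : ∀ i j, (i, j) ∈ E → X i j = 0) : 0 ≤ offDiagPenalty l X :=
  Finset.sum_nonneg fun i _ => Finset.sum_nonneg fun j _ => offDiagPenalty_term_nonneg hl hX i j

lemma isDiag_of_offDiagPenalty_eq_zero (hl : ∀ i j, i ≠ j → (i, j) ∉ E → 0 < l i j)
    {X : Matrix n n ℝ} (hX : ∀ i j, (i, j) ∈ E → X i j = 0) (h : offDiagPenalty l X = 0) :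
    X.IsDiag := by
  intro i j hij
  by_cases hE : (i, j) ∈ E
  · exact hX i j hE
  have hrow := (Finset.sum_eq_zero_iff_of_nonneg fun i _ => Finset.sum_nonneg fun j _ =>
    offDiagPenalty_term_nonneg hl hX i j).mp h i (Finset.mem_univ i)
  have hterm := (Finset.sum_eq_zero_iff_of_nonneg fun j _ =>
    offDiagPenalty_term_nonneg hl hX i j).mp hrow j (Finset.mem_univ j)
  simpa [hij, (hl i j hij hE).ne'] using hterm

variable {S : Matrix n n ℝ}

lemma exists_pos_mul_trace_le_trace_mul_add_offDiagPenalty (hS : S.PosSemidef)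
    (hSdiag : ∀ i, 0 < S i i) (hl : ∀ i j, i ≠ j → (i, j) ∉ E → 0 < l i j) :
    ∃ δ > 0, ∀ X ∈ signConstrainedCone E, δ * X.trace ≤ (X * S).trace + offDiagPenalty l X := by
  refine exists_pos_mul_trace_le (isClosed_signConstrainedCone E) (fun X hX => hX.1)
    (fun X hX t ht => smul_mem_signConstrainedCone hX ht)
    ((continuous_id.matrix_mul continuous_const).matrix_trace.add (continuous_offDiagPenalty l))
    (fun X _ t ht => by
      rw [offDiagPenalty_smul l X ht, smul_mul, trace_smul, smul_eq_mul, mul_add])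
    fun X ⟨hpsd, _, hE⟩ hX0 => ?_
  by_contra! hle
  have htrS := hpsd.trace_mul_nonneg_s6 hS
  have hpen := offDiagPenalty_nonneg hl hE
  have hdiag := isDiag_of_offDiagPenalty_eq_zero hl hE (by linarith)
  have hsum : ∑ i, X i i * S i i = 0 := by
    rw [← hdiag.trace_mul_eq_sum]
    linarith
  have hXii : ∀ i, X i i = 0 := fun i =>
    (mul_eq_zero.mp ((Finset.sum_eq_zero_iff_of_nonneg fun i _ =>
      mul_nonneg hpsd.diag_nonneg (hSdiag i).le).mp hsum i (Finset.mem_univ i))).resolve_right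
      (hSdiag i).ne'
  exact hX0 (hpsd.trace_eq_zero_iff.mp (Finset.sum_eq_zero fun i _ => hXii i))

end SignConstrained

section Objective

variable {p : ℕ} {E : Set (Fin p × Fin p)} {l : Fin p → Fin p → ℝ} {S : Matrix (Fin p) (Fin p) ℝ}

lemma obj_eq (S : Matrix (Fin p) (Fin p) ℝ) (l : Fin p → Fin p → ℝ)
    (X : Matrix (Fin p) (Fin p) ℝ) :
    obj S l X = -Real.log X.det + (X * S).trace + offDiagPenalty l X :=
  rfl

lemma feasible_iff_mem_signConstrainedCone {X : Matrix (Fin p) (Fin p) ℝ} :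
    feasible E X ↔ X ∈ signConstrainedCone E ∧ X.det ≠ 0 :=
  ⟨fun h => ⟨⟨h.1.posSemidef, h.2⟩, h.1.det_pos.ne'⟩,
    fun ⟨⟨hpsd, h⟩, hdet⟩ => ⟨hpsd.posDef_iff_det_ne_zero.mpr hdet, h⟩⟩

lemma exp_neg_le_det_of_obj_le (hS : S.PosSemidef) (hl : ∀ i j, i ≠ j → (i, j) ∉ E → 0 < l i j)
    {X : Matrix (Fin p) (Fin p) ℝ} (hX : feasible E X) {c : ℝ} (h : obj S l X ≤ c) :
    Real.exp (-c) ≤ X.det := by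
  have htrS := hX.1.posSemidef.trace_mul_nonneg_s6 hS
  have hpen := offDiagPenalty_nonneg hl hX.2.2
  rw [obj_eq] at h
  rw [← Real.exp_log hX.1.det_pos]
  exact Real.exp_le_exp.mpr (by linarith)

lemma continuousOn_obj (S : Matrix (Fin p) (Fin p) ℝ) (l : Fin p → Fin p → ℝ) :
    ContinuousOn (obj S l) {X | X.det ≠ 0} := by
  refine (ContinuousOn.add ?_ (by fun_prop)).add (continuous_offDiagPenalty l).continuousOn
  exact (continuous_id.matrix_det.continuousOn.log fun X hX => hX).neg

lemma isClosed_setOf_feasible_obj_le (hS : S.PosSemidef)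
    (hl : ∀ i j, i ≠ j → (i, j) ∉ E → 0 < l i j) (c : ℝ) :
    IsClosed {X | feasible E X ∧ obj S l X ≤ c} := by
  set A := signConstrainedCone E ∩ {X | Real.exp (-c) ≤ X.det}
  have hA : IsClosed A := (isClosed_signConstrainedCone E).inter
    (isClosed_le continuous_const continuous_id.matrix_det)
  have hdet : ∀ X ∈ A, X.det ≠ 0 := fun X hX => ((Real.exp_pos _).trans_le hX.2).ne'
  convert ((continuousOn_obj S l).mono hdet).preimage_isClosed_of_isClosed hA isClosed_Iic using 1
  ext X
  exact ⟨fun ⟨hX, h⟩ => ⟨⟨(feasible_iff_mem_signConstrainedCone.mp hX).1, exp_neg_le_det_of_obj_le hS hl hX h⟩, h⟩,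
    fun ⟨hXA, h⟩ => ⟨feasible_iff_mem_signConstrainedCone.mpr ⟨hXA.1, hdet X hXA⟩, h⟩⟩

lemma exists_trace_le_of_obj_le (hS : S.PosSemidef) (hSdiag : ∀ i, 0 < S i i)
    (hl : ∀ i j, i ≠ j → (i, j) ∉ E → 0 < l i j) (c : ℝ) :
    ∃ T > 0, ∀ X, feasible E X → obj S l X ≤ c → X.trace ≤ T := by
  obtain ⟨δ, hδ, hcoer⟩ := exists_pos_mul_trace_le_trace_mul_add_offDiagPenalty hS hSdiag hl
  obtain ⟨T, hT, hbound⟩ := Real.exists_le_of_mul_sub_mul_log_le hδ p c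
  refine ⟨T, hT, fun X hX h => hbound _ ?_⟩
  have hlog : Real.log X.det ≤ p * Real.log X.trace := by
    simpa [Real.log_pow] using Real.log_le_log hX.1.det_pos hX.1.det_le_trace_pow
  have := hcoer X (feasible_iff_mem_signConstrainedCone.mp hX).1
  rw [obj_eq] at h
  linarith

end Objective

theorem stmt_6_general {p : ℕ} (S : Matrix (Fin p) (Fin p) ℝ) (hS : S.PosSemidef)
    (hSdiag : ∀ i, 0 < S i i)
    (E : Set (Fin p × Fin p))
    (l : Fin p → Fin p → ℝ) (hl : ∀ i j, i ≠ j → (i, j) ∉ E → 0 < l i j)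
    (X0 : Matrix (Fin p) (Fin p) ℝ) :
    IsCompact {X : Matrix (Fin p) (Fin p) ℝ | feasible E X ∧ obj S l X ≤ obj S l X0} ∧
    IsClosed {X : Matrix (Fin p) (Fin p) ℝ | feasible E X ∧ obj S l X ≤ obj S l X0} ∧
    ∃ m M : ℝ, 0 < m ∧ m ≤ M ∧
      ∀ X ∈ {X : Matrix (Fin p) (Fin p) ℝ | feasible E X ∧ obj S l X ≤ obj S l X0},
        (X - m • (1 : Matrix (Fin p) (Fin p) ℝ)).PosSemidef ∧
        (M • (1 : Matrix (Fin p) (Fin p) ℝ) - X).PosSemidef := by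
  obtain ⟨T, hT, htr⟩ := exists_trace_le_of_obj_le hS hSdiag hl (obj S l X0)
  obtain ⟨m, hm, hmT, hbounds⟩ :=
    exists_smul_one_le_of_trace_le_of_le_det (n := Fin p) hT (Real.exp_pos (-obj S l X0))
  have hclosed := isClosed_setOf_feasible_obj_le hS hl (obj S l X0)
  refine ⟨isCompact_of_isClosed_of_trace_le hclosed (fun X hX => hX.1.1.posSemidef)
    (fun X hX => htr X hX.1 hX.2), hclosed, m, T, hm, hmT, fun X hX => ?_⟩
  exact hbounds X hX.1.1 (htr X hX.1 hX.2) (exp_neg_le_det_of_obj_le hS hl hX.1 hX.2)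

/-- The lower level set `L_f = {X feasible : f(X) ≤ f(X⁰)}` of the
sign-constrained log-determinant objective is compact: it is closed and contained in
`{X : m I ⪯ X ⪯ M I}` for some constants `0 < m ≤ M`. -/
theorem stmt_6 {p : ℕ} (S : Matrix (Fin p) (Fin p) ℝ) (hS : S.PosSemidef)
    (hSdiag : ∀ i, 0 < S i i)
    (E : Set (Fin p × Fin p)) (hE : ∀ ij ∈ E, ij.1 ≠ ij.2)
    (l : Fin p → Fin p → ℝ) (hl : ∀ i j, i ≠ j → (i, j) ∉ E → 0 < l i j)
    (X0 : Matrix (Fin p) (Fin p) ℝ) (hX0 : feasible E X0) :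
    IsCompact {X : Matrix (Fin p) (Fin p) ℝ | feasible E X ∧ obj S l X ≤ obj S l X0} ∧
    IsClosed {X : Matrix (Fin p) (Fin p) ℝ | feasible E X ∧ obj S l X ≤ obj S l X0} ∧
    ∃ m M : ℝ, 0 < m ∧ m ≤ M ∧
      ∀ X ∈ {X : Matrix (Fin p) (Fin p) ℝ | feasible E X ∧ obj S l X ≤ obj S l X0},
        (X - m • (1 : Matrix (Fin p) (Fin p) ℝ)).PosSemidef ∧
        (M • (1 : Matrix (Fin p) (Fin p) ℝ) - X).PosSemidef :=
  stmt_6_general S hS hSdiag E l hl X0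
end
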